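/- arXiv:2206.11999 — 5 statements merged into one kernel-verified Lean document; each statement's English description precedes it below -/
import Mathlib

section
/- The semigroup algebra kS of an inverse semigroup S, with comultiplication Δ(δ_s) = δ_s ⊗ δ_s, counit ε(δ_s) = 1 and pseudo-antipode S(δ_s) = δ_{s*}, is a counital quantum inverse semigroup: Δ is multiplicative and coassociative, the pseudo-antipode is antimultiplicative, I∗S∗I = I and S∗I∗S = S hold in the convolution algebra, and the images of I∗S and S∗I mutually commute. -/
set_option maxHeartbeats 1000000

open TensorProduct

/-- The convolution product on `End_k(H)`: `(f ∗ g)(h) = f(h₍₁₎) · g(h₍₂₎)`. -/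
noncomputable def convProd {k H : Type*} [CommRing k] [NonUnitalRing H]
    [Module k H] [SMulCommClass k H H] [IsScalarTower k H H]
    (Δ : H →ₗ[k] H ⊗[k] H) (f g : H →ₗ[k] H) : H →ₗ[k] H :=
  (LinearMap.mul' k H) ∘ₗ (TensorProduct.map f g) ∘ₗ Δ

/-- The comultiplication on the semigroup algebra `kS`, `Δ(δ_s) = δ_s ⊗ δ_s`. -/
noncomputable def sgDelta (k : Type*) [Field k] {S : Type*} [Semigroup S] :
    MonoidAlgebra k S →ₗ[k] MonoidAlgebra k S ⊗[k] MonoidAlgebra k S :=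
  (Finsupp.lsum k fun s => LinearMap.toSpanSingleton k _
    ((MonoidAlgebra.single s (1 : k)) ⊗ₜ[k] (MonoidAlgebra.single s (1 : k)))) ∘ₗ
    (MonoidAlgebra.coeffLinearEquiv k).toLinearMap

/-- The counit on the semigroup algebra `kS`, `ε(δ_s) = 1`. -/
noncomputable def sgCounit (k : Type*) [Field k] {S : Type*} [Semigroup S] :
    MonoidAlgebra k S →ₗ[k] k :=
  (Finsupp.lsum k fun _ => (LinearMap.id : k →ₗ[k] k)) ∘ₗ (MonoidAlgebra.coeffLinearEquiv k).toLinearMap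

/-- The pseudo-antipode on the semigroup algebra `kS`, `𝒮(δ_s) = δ_{s*}`. -/
noncomputable def sgAntipode (k : Type*) [Field k] {S : Type*} [Semigroup S]
    (star : S → S) : MonoidAlgebra k S →ₗ[k] MonoidAlgebra k S :=
  (MonoidAlgebra.coeffLinearEquiv k).symm.toLinearMap ∘ₗ Finsupp.lmapDomain k k star ∘ₗ
    (MonoidAlgebra.coeffLinearEquiv k).toLinearMap

section InverseSemigroup
variable {S : Type*} [Semigroup S] (star : S → S)

lemma inv_unique_aux
    (hidem : ∀ e f : S, e * e = e → f * f = f → e * f = f * e)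
    (a x y : S) (hx1 : a*x*a = a) (hx2 : x*a*x = x)
    (hy1 : a*y*a = a) (hy2 : y*a*y = y) : x = y := by
  have hxa : (x*a)*(x*a) = x*a := by
    calc (x*a)*(x*a) = (x*a*x)*a := by simp only [mul_assoc]
      _ = x*a := by rw [hx2]
  have hya : (y*a)*(y*a) = y*a := by
    calc (y*a)*(y*a) = (y*a*y)*a := by simp only [mul_assoc]
      _ = y*a := by rw [hy2]
  have hax : (a*x)*(a*x) = a*x := by
    calc (a*x)*(a*x) = a*(x*a*x) := by simp only [mul_assoc]
      _ = a*x := by rw [hx2]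
  have hay : (a*y)*(a*y) = a*y := by
    calc (a*y)*(a*y) = a*(y*a*y) := by simp only [mul_assoc]
      _ = a*y := by rw [hy2]
  have h1 : x = y*a*x := by
    calc x = x*a*x := hx2.symm
      _ = x*(a*y*a)*x := by rw [hy1]
      _ = ((x*a)*(y*a))*x := by simp only [mul_assoc]
      _ = ((y*a)*(x*a))*x := by rw [hidem _ _ hxa hya]
      _ = (y*a)*(x*a*x) := by simp only [mul_assoc]
      _ = y*a*x := by rw [hx2]
  have h2 : y = y*a*x := by
    calc y = y*a*y := hy2.symm
      _ = y*(a*x*a)*y := by rw [hx1]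
      _ = y*((a*x)*(a*y)) := by simp only [mul_assoc]
      _ = y*((a*y)*(a*x)) := by rw [hidem _ _ hax hay]
      _ = (y*a*y)*(a*x) := by simp only [mul_assoc]
      _ = y*(a*x) := by rw [hy2]
      _ = y*a*x := (mul_assoc y a x).symm
  rw [h1, ← h2]

lemma star_anti
    (hstar1 : ∀ s : S, s * star s * s = s)
    (hstar2 : ∀ s : S, star s * s * star s = star s)
    (hidem : ∀ e f : S, e * e = e → f * f = f → e * f = f * e)
    (s t : S) : star (s*t) = star t * star s := by
  have hss : ∀ u : S, (u * star u) * (u * star u) = u * star u := fun u => by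
    calc (u*star u)*(u*star u) = (u*star u*u)*star u := by simp only [mul_assoc]
      _ = u*star u := by rw [hstar1]
  have hss' : ∀ u : S, (star u * u) * (star u * u) = star u * u := fun u => by
    calc (star u*u)*(star u*u) = (star u*u*star u)*u := by simp only [mul_assoc]
      _ = star u*u := by rw [hstar2]
  refine inv_unique_aux hidem (s*t) _ _ (hstar1 _) (hstar2 _) ?_ ?_
  · calc (s*t)*(star t*star s)*(s*t)
        = s*(((t*star t)*(star s*s))*t) := by simp only [mul_assoc]
      _ = s*(((star s*s)*(t*star t))*t) := by rw [hidem _ _ (hss t) (hss' s)]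
      _ = (s*star s*s)*(t*star t*t) := by simp only [mul_assoc]
      _ = s*t := by rw [hstar1, hstar1]
  · calc (star t*star s)*(s*t)*(star t*star s)
        = star t*(((star s*s)*(t*star t))*star s) := by simp only [mul_assoc]
      _ = star t*(((t*star t)*(star s*s))*star s) := by rw [hidem _ _ (hss' s) (hss t)]
      _ = (star t*t*star t)*(star s*s*star s) := by simp only [mul_assoc]
      _ = star t*star s := by rw [hstar2, hstar2]

end InverseSemigroup

section Helpers
variable (k : Type*) [Field k] {S : Type*} [Semigroup S]

lemma sgDelta_single (s : S) (a : k) :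
    sgDelta k (MonoidAlgebra.single s a)
      = (MonoidAlgebra.single s a) ⊗ₜ[k] (MonoidAlgebra.single s (1:k)) := by
  rw [sgDelta, LinearMap.comp_apply, LinearEquiv.coe_coe, MonoidAlgebra.coeffLinearEquiv_apply,
    MonoidAlgebra.coeff_single]
  erw [Finsupp.lsum_single]
  rw [LinearMap.toSpanSingleton_apply, smul_tmul']
  congr 1
  exact (MonoidAlgebra.smul_single a s (1:k)).trans (by rw [smul_eq_mul, mul_one])

lemma sgAntipode_single (star : S → S) (s : S) (a : k) :
    sgAntipode k star (MonoidAlgebra.single s a) = MonoidAlgebra.single (star s) a := by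
  rw [sgAntipode, LinearMap.comp_apply, LinearMap.comp_apply, LinearEquiv.coe_coe,
    LinearEquiv.coe_coe, MonoidAlgebra.coeffLinearEquiv_apply, MonoidAlgebra.coeff_single]
  rw [MonoidAlgebra.coeffLinearEquiv_symm_apply]
  erw [Finsupp.lmapDomain_apply, Finsupp.mapDomain_single]
  rfl

lemma sgCounit_single (s : S) (a : k) :
    sgCounit k (MonoidAlgebra.single s a) = a := by
  rw [sgCounit, LinearMap.comp_apply, LinearEquiv.coe_coe, MonoidAlgebra.coeffLinearEquiv_apply,
    MonoidAlgebra.coeff_single]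
  erw [Finsupp.lsum_single]
  rfl

lemma convProd_single (f g : MonoidAlgebra k S →ₗ[k] MonoidAlgebra k S) (s : S) (a : k) :
    convProd (sgDelta k) f g (MonoidAlgebra.single s a)
      = f (MonoidAlgebra.single s a) * g (MonoidAlgebra.single s (1:k)) := by
  simp [convProd, sgDelta_single, LinearMap.mul'_apply]

end Helpers

/-- **The semigroup algebra of an inverse semigroup is a counital QISG.**
Let `S` be an inverse semigroup (a semigroup with a pseudo-inverse operation `star`
whose idempotents commute).  Then on `kS`, with `Δ(δ_s) = δ_s ⊗ δ_s`,
`ε(δ_s) = 1`, `𝒮(δ_s) = δ_{s*}`: `Δ` is multiplicative and coassociative, `𝒮` is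
antimultiplicative, `I∗𝒮∗I = I` and `𝒮∗I∗𝒮 = 𝒮` in the convolution algebra, the
images of `I∗𝒮` and `𝒮∗I` mutually commute, and `ε` is a counit with `ε ∘ 𝒮 = ε`. -/
theorem semigroupAlgebra_is_QISG (k : Type*) [Field k] {S : Type*} [Semigroup S]
    (star : S → S)
    (hstar1 : ∀ s : S, s * star s * s = s)
    (hstar2 : ∀ s : S, star s * s * star s = star s)
    (hidem : ∀ e f : S, e * e = e → f * f = f → e * f = f * e) :
    (∀ x y : MonoidAlgebra k S, sgDelta k (x * y) = sgDelta k x * sgDelta k y) ∧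
    ((TensorProduct.assoc k (MonoidAlgebra k S) (MonoidAlgebra k S)
        (MonoidAlgebra k S)).toLinearMap ∘ₗ
        (TensorProduct.map (sgDelta k) LinearMap.id) ∘ₗ sgDelta k
      = (TensorProduct.map LinearMap.id (sgDelta k)) ∘ₗ sgDelta k) ∧
    (∀ x y : MonoidAlgebra k S,
      sgAntipode k star (x * y) = sgAntipode k star y * sgAntipode k star x) ∧
    (convProd (sgDelta k) (convProd (sgDelta k) LinearMap.id (sgAntipode k star))
        LinearMap.id = LinearMap.id) ∧
    (convProd (sgDelta k) (convProd (sgDelta k) (sgAntipode k star) LinearMap.id)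
        (sgAntipode k star) = sgAntipode k star) ∧
    (∀ x y : MonoidAlgebra k S,
      convProd (sgDelta k) LinearMap.id (sgAntipode k star) x *
        convProd (sgDelta k) (sgAntipode k star) LinearMap.id y =
      convProd (sgDelta k) (sgAntipode k star) LinearMap.id y *
        convProd (sgDelta k) LinearMap.id (sgAntipode k star) x) ∧
    ((TensorProduct.lid k (MonoidAlgebra k S)).toLinearMap ∘ₗ
        (TensorProduct.map (sgCounit k) LinearMap.id) ∘ₗ sgDelta k = LinearMap.id) ∧
    ((TensorProduct.rid k (MonoidAlgebra k S)).toLinearMap ∘ₗ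
        (TensorProduct.map LinearMap.id (sgCounit k)) ∘ₗ sgDelta k = LinearMap.id) ∧
    (sgCounit k ∘ₗ sgAntipode k star = sgCounit (S := S) k) := by
  have hss : ∀ s : S, (s * star s) * (s * star s) = s * star s := fun s => by
    rw [← mul_assoc, hstar1]
  have hss' : ∀ s : S, (star s * s) * (star s * s) = star s * s := fun s => by
    rw [← mul_assoc, hstar2]
  refine ⟨?_, ?_, ?_, ?_, ?_, ?_, ?_, ?_, ?_⟩
  · intro x y
    induction x using MonoidAlgebra.induction_linear with
    | zero => simp
    | add a b ha hb => simp [add_mul, map_add, ha, hb]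
    | single s a =>
      induction y using MonoidAlgebra.induction_linear with
      | zero => simp
      | add a b ha hb => simp [mul_add, map_add, ha, hb]
      | single t b =>
        rw [MonoidAlgebra.single_mul_single, sgDelta_single, sgDelta_single, sgDelta_single,
          Algebra.TensorProduct.tmul_mul_tmul, MonoidAlgebra.single_mul_single,
          MonoidAlgebra.single_mul_single, one_mul]
  · apply LinearMap.ext
    intro x
    induction x using MonoidAlgebra.induction_linear with
    | zero => simp only [map_zero]
    | add a b ha hb => simp only [map_add, ha, hb]
    | single s a =>
      simp only [LinearMap.coe_comp, Function.comp_apply, LinearEquiv.coe_coe]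
      rw [sgDelta_single, TensorProduct.map_tmul, TensorProduct.map_tmul]
      simp only [LinearMap.id_apply]
      rw [sgDelta_single, sgDelta_single, TensorProduct.assoc_tmul]
  · intro x y
    induction x using MonoidAlgebra.induction_linear with
    | zero => simp
    | add a b ha hb => simp [add_mul, mul_add, map_add, ha, hb]
    | single s a =>
      induction y using MonoidAlgebra.induction_linear with
      | zero => simp
      | add a b ha hb => simp [mul_add, add_mul, map_add, ha, hb]
      | single t b =>
        rw [MonoidAlgebra.single_mul_single, sgAntipode_single, sgAntipode_single,
          sgAntipode_single, MonoidAlgebra.single_mul_single, mul_comm b a,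
          star_anti star hstar1 hstar2 hidem]
  · apply LinearMap.ext
    intro x
    induction x using MonoidAlgebra.induction_linear with
    | zero => simp
    | add a b ha hb => simp only [map_add, ha, hb]
    | single s a =>
      rw [convProd_single, convProd_single]
      simp only [LinearMap.id_apply, sgAntipode_single]
      rw [MonoidAlgebra.single_mul_single, MonoidAlgebra.single_mul_single, mul_one, mul_one, hstar1]
  · apply LinearMap.ext
    intro x
    induction x using MonoidAlgebra.induction_linear with
    | zero => simp
    | add a b ha hb => simp only [map_add, ha, hb]
    | single s a =>
      rw [convProd_single, convProd_single]
      simp only [LinearMap.id_apply, sgAntipode_single]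
      rw [MonoidAlgebra.single_mul_single, MonoidAlgebra.single_mul_single, mul_one, mul_one, hstar2]
  · intro x y
    induction x using MonoidAlgebra.induction_linear with
    | zero => simp
    | add a b ha hb => simp [add_mul, mul_add, map_add, ha, hb]
    | single s a =>
      induction y using MonoidAlgebra.induction_linear with
      | zero => simp
      | add a b ha hb => simp [mul_add, add_mul, map_add, ha, hb]
      | single t b =>
        rw [convProd_single, convProd_single]
        simp only [LinearMap.id_apply, sgAntipode_single]
        rw [MonoidAlgebra.single_mul_single, MonoidAlgebra.single_mul_single,
          MonoidAlgebra.single_mul_single, MonoidAlgebra.single_mul_single,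
          hidem _ _ (hss s) (hss' t)]
        congr 1
        ring
  · apply LinearMap.ext
    intro x
    induction x using MonoidAlgebra.induction_linear with
    | zero => simp
    | add a b ha hb => simp only [map_add, ha, hb]
    | single s a =>
      rw [LinearMap.comp_apply, LinearMap.comp_apply, sgDelta_single]
      rw [TensorProduct.map_tmul, sgCounit_single]
      simp only [LinearMap.id_apply, LinearEquiv.coe_coe, TensorProduct.lid_tmul]
      erw [MonoidAlgebra.smul_single]
      rw [smul_eq_mul, mul_one]
  · apply LinearMap.ext
    intro x
    induction x using MonoidAlgebra.induction_linear with
    | zero => simp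
    | add a b ha hb => simp only [map_add, ha, hb]
    | single s a =>
      rw [LinearMap.comp_apply, LinearMap.comp_apply, sgDelta_single]
      rw [TensorProduct.map_tmul, sgCounit_single]
      simp only [LinearMap.id_apply, LinearEquiv.coe_coe, TensorProduct.rid_tmul]
      rw [one_smul]
  · apply LinearMap.ext
    intro x
    induction x using MonoidAlgebra.induction_linear with
    | zero => simp
    | add a b ha hb => simp only [map_add, ha, hb]
    | single s a =>
      rw [LinearMap.comp_apply, sgAntipode_single, sgCounit_single, sgCounit_single]
end

section
/- For a local biretraction α : H → A of a commutative Hopf algebroid H over A: (1) α(1_H) is an idempotent of A and the image α(H) equals the ideal A·α(1_H); (2) the element e^α appearing in axiom (BRT2) is idempotent; (3) e^α is unique. -/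
/-! Multiplicativity of `α` makes `α 1` idempotent and a unit for the image of `α`. For a
witness `e`, the map `α ∘ t` is injective on `A·e` and sends `e`, `e * e` and, for a second
witness `f`, also `e * f ∈ A·e ∩ A·f` to `α 1`; hence `e * e = e` and `e = e * f = f`. -/

open TensorProduct

/-- The unital ideal `A·e` generated by an element `e` of a commutative ring. -/
def idealOf {A : Type*} [CommRing A] (e : A) : Set A := Set.range (fun a => a * e)

/-- A commutative Hopf algebroid over a commutative base algebra `A`:
a commutative algebra `H` with source and target maps `s, t : A → H`,
comultiplication `Δ`, counit `ε` and antipode `S` satisfying the standard axioms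
(`S∘t = s`, `S∘s = t`, `S(h₍₁₎)h₍₂₎ = s(ε h)`, `h₍₁₎S(h₍₂₎) = t(ε h)`, etc.). -/
structure CommHopfAlgebroid (k A H : Type*) [CommRing k] [CommRing A] [CommRing H]
    [Algebra k A] [Algebra k H] where
  s : A →ₐ[k] H
  t : A →ₐ[k] H
  comul : H →ₐ[k] H ⊗[k] H
  counit : H →ₐ[k] A
  antipode : H →ₐ[k] H
  coassoc :
    (TensorProduct.assoc k H H H).toLinearMap ∘ₗ
      (TensorProduct.map comul.toLinearMap LinearMap.id) ∘ₗ comul.toLinearMap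
    = (TensorProduct.map LinearMap.id comul.toLinearMap) ∘ₗ comul.toLinearMap
  counit_left : (LinearMap.mul' k H) ∘ₗ
      (TensorProduct.map (t.toLinearMap ∘ₗ counit.toLinearMap) LinearMap.id) ∘ₗ
        comul.toLinearMap = LinearMap.id
  counit_right : (LinearMap.mul' k H) ∘ₗ
      (TensorProduct.map LinearMap.id (s.toLinearMap ∘ₗ counit.toLinearMap)) ∘ₗ
        comul.toLinearMap = LinearMap.id
  counit_s : ∀ a : A, counit (s a) = a
  counit_t : ∀ a : A, counit (t a) = a
  antipode_s : ∀ a : A, antipode (s a) = t a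
  antipode_t : ∀ a : A, antipode (t a) = s a
  comul_t : ∀ a : A, comul (t a) = t a ⊗ₜ[k] 1
  comul_s : ∀ a : A, comul (s a) = 1 ⊗ₜ[k] s a
  antipode_left : (LinearMap.mul' k H) ∘ₗ
      (TensorProduct.map antipode.toLinearMap LinearMap.id) ∘ₗ comul.toLinearMap
    = s.toLinearMap ∘ₗ counit.toLinearMap
  antipode_right : (LinearMap.mul' k H) ∘ₗ
      (TensorProduct.map LinearMap.id antipode.toLinearMap) ∘ₗ comul.toLinearMap
    = t.toLinearMap ∘ₗ counit.toLinearMap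

variable {k A H : Type*} [CommRing k] [CommRing A] [CommRing H] [Algebra k A] [Algebra k H]

/-- The convolution product of right `A`-linear maps `H → A`:
`(α ∗ β)(h) = β(t(α(h₍₁₎)) · h₍₂₎) = β(t(α(h₍₁₎))) · β(h₍₂₎)`. -/
noncomputable def brtConv (D : CommHopfAlgebroid k A H) (α β : H →ₗ[k] A) : H →ₗ[k] A :=
  β ∘ₗ (LinearMap.mul' k H) ∘ₗ
    (TensorProduct.map (D.t.toLinearMap ∘ₗ α) LinearMap.id) ∘ₗ D.comul.toLinearMap

/-- `e` is a witness for axiom (BRT2) of a local biretraction `α`: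
`α(t(e)) = α(1)` and `α∘t` restricts to a bijection `A·e → A·α(1)`. -/
def IsBrtWitness (D : CommHopfAlgebroid k A H) (α : H →ₗ[k] A) (e : A) : Prop :=
  α (D.t e) = α 1 ∧ Set.BijOn (fun a => α (D.t a)) (idealOf e) (idealOf (α 1))

/-- A local biretraction of a commutative Hopf algebroid: a linear multiplicative
map `α : H → A` satisfying (BRT1) `α(s(a)) = a·α(1)` and (BRT2). -/
def IsBiretraction (D : CommHopfAlgebroid k A H) (α : H →ₗ[k] A) : Prop :=
  (∀ x y : H, α (x * y) = α x * α y) ∧ (∀ a : A, α (D.s a) = a * α 1) ∧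
    ∃ e : A, IsBrtWitness D α e

section Multiplicative

variable {M N : Type*} [MulOneClass M] [Mul N] {f : M → N}

theorem isIdempotentElem_map_one (hf : ∀ x y, f (x * y) = f x * f y) :
    IsIdempotentElem (f 1) := by
  rw [IsIdempotentElem, ← hf, one_mul]

theorem map_mul_map_one (hf : ∀ x y, f (x * y) = f x * f y) (x : M) : f x * f 1 = f x := by
  rw [← hf, mul_one]

end Multiplicative

theorem mul_mem_idealOf_left (a e : A) : a * e ∈ idealOf e := ⟨a, rfl⟩

theorem mul_mem_idealOf_right (e a : A) : e * a ∈ idealOf e := ⟨a, mul_comm a e⟩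

theorem mem_idealOf_self (e : A) : e ∈ idealOf e := ⟨1, one_mul e⟩

section Biretraction

variable {D : CommHopfAlgebroid k A H} {α : H →ₗ[k] A}

theorem range_eq_idealOf_map_one (hmul : ∀ x y : H, α (x * y) = α x * α y)
    (hs : ∀ a : A, α (D.s a) = a * α 1) : Set.range α = idealOf (α 1) := by
  ext x
  constructor
  · rintro ⟨h, rfl⟩
    exact ⟨α h, map_mul_map_one hmul h⟩
  · rintro ⟨a, rfl⟩
    exact ⟨D.s a, hs a⟩

namespace IsBrtWitness

variable {e f : A}

theorem eq_of_mem_idealOf (he : IsBrtWitness D α e) {a : A} (ha : a ∈ idealOf e)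
    (hta : α (D.t a) = α 1) : a = e :=
  he.2.injOn ha (mem_idealOf_self e) (hta.trans he.1.symm)

theorem map_t_mul (hmul : ∀ x y : H, α (x * y) = α x * α y) (he : IsBrtWitness D α e)
    (hf : IsBrtWitness D α f) : α (D.t (e * f)) = α 1 := by
  rw [map_mul, hmul, he.1, hf.1, (isIdempotentElem_map_one hmul).eq]

theorem isIdempotentElem (hmul : ∀ x y : H, α (x * y) = α x * α y)
    (he : IsBrtWitness D α e) : IsIdempotentElem e :=
  he.eq_of_mem_idealOf (mul_mem_idealOf_left e e) (he.map_t_mul hmul he)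

theorem unique (hmul : ∀ x y : H, α (x * y) = α x * α y) (he : IsBrtWitness D α e)
    (hf : IsBrtWitness D α f) : e = f :=
  (he.eq_of_mem_idealOf (mul_mem_idealOf_right e f) (he.map_t_mul hmul hf)).symm.trans
    (hf.eq_of_mem_idealOf (mul_mem_idealOf_left e f) (he.map_t_mul hmul hf))

end IsBrtWitness

end Biretraction

/-- **Basic properties of local biretractions.** For a local biretraction `α` of a
commutative Hopf algebroid `H` over `A`: (1) `α(1)` is idempotent and the image of
`α` is the ideal `A·α(1)`; (2) any (BRT2)-witness `e^α` is idempotent; (3) the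
witness `e^α` is unique. -/
theorem biretraction_basic_properties (D : CommHopfAlgebroid k A H)
    (α : H →ₗ[k] A) (hα : IsBiretraction D α) :
    (α 1 * α 1 = α 1) ∧
    (Set.range α = idealOf (α 1)) ∧
    (∀ e : A, IsBrtWitness D α e → e * e = e) ∧
    (∀ e f : A, IsBrtWitness D α e → IsBrtWitness D α f → e = f) := by
  obtain ⟨hmul, hs, -⟩ := hα
  exact ⟨isIdempotentElem_map_one hmul, range_eq_idealOf_map_one hmul hs,
    fun _ he => he.isIdempotentElem hmul, fun _ _ he hf => he.unique hmul hf⟩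
end

section
/- Let φ : A → A be a multiplicative k-linear map on a commutative algebra A that is idempotent under composition (φ∘φ = φ) and restricts to a bijection on the unital ideal A·φ(1_A). Then φ(a) = a·φ(1_A) for all a ∈ A. -/
section MultiplicativeIdempotent

variable {M : Type*} [Monoid M] {f : M → M}

theorem map_mul_map_one_of_map_mul (hmul : ∀ x y, f (x * y) = f x * f y) (a : M) :
    f a * f 1 = f a := by
  rw [← hmul, mul_one]

/-- Both `a * f 1` and `f a` lie in `M * f 1` and are sent to `f a`, so injectivity there
identifies them. -/
theorem map_eq_mul_map_one_of_injOn (hmul : ∀ x y, f (x * y) = f x * f y)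
    (hidem : ∀ a, f (f a) = f a) (hinj : Set.InjOn f (Set.range (· * f 1))) (a : M) :
    f a = a * f 1 := by
  have hfa : f a * f 1 = f a := map_mul_map_one_of_map_mul hmul a
  have hmem_fa : f a ∈ Set.range (· * f 1) := ⟨f a, hfa⟩
  have hmem_mul : a * f 1 ∈ Set.range (· * f 1) := ⟨a, rfl⟩
  refine hinj hmem_fa hmem_mul ?_
  calc f (f a) = f a := hidem a
    _ = f a * f (f 1) := by rw [hidem, hfa]
    _ = f (a * f 1) := (hmul a (f 1)).symm

end MultiplicativeIdempotent

/-- **Partial automorphisms act as multiplication by their value at `1`.**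
If `φ : A → A` is a `k`-linear multiplicative map on a commutative algebra `A`,
idempotent under composition (`φ∘φ = φ`), restricting to a bijection of the unital
ideal `A·φ(1)`, then `φ(a) = a·φ(1)` for all `a ∈ A`. -/
theorem partial_automorphism_eq_mul {k A : Type*} [CommRing k] [CommRing A] [Algebra k A]
    (φ : A →ₗ[k] A)
    (hmul : ∀ x y : A, φ (x * y) = φ x * φ y)
    (hidem : ∀ a : A, φ (φ a) = φ a)
    (hbij : Set.BijOn φ (idealOf (φ 1)) (idealOf (φ 1))) :
    ∀ a : A, φ a = a * φ 1 :=
  map_eq_mul_map_one_of_injOn hmul hidem hbij.injOn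
end

section
/- Let A be a commutative algebra and let J(A) be the set of multiplicative endomorphisms φ : A → A such that there exists an idempotent e ∈ A with φ(A) = A·φ(e) and φ restricting to an algebra isomorphism Ae → Aφ(e). Then J(A) is closed under composition: for φ, ψ ∈ J(A) with idempotents e, f, the composite ψ∘φ lies in J(A) with ψ∘φ(A) = A·ψ(φ(e))ψ(f) and associated idempotent g = (φ|_{Ae})^{-1}(φ(e)f). -/
/-!
If `g ∈ Ae` and `φ(g) = φ(e)f` is idempotent, injectivity of `φ` on `Ae` makes `g` idempotent,
and then restricting the bijection `Ae → Aφ(e)` to the smaller ideal `Ag` still gives a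
bijection `Ag → Aφ(g)`. Since `Aφ(g) = Aφ(e)f` lies in `Af`, the same argument for `ψ` maps it
bijectively onto `Aψ(φ(g)) = Aψ(φ(e))ψ(f)`. As the range of `ψ` is `Aψ(f)`, the image under `ψ`
of any ideal `Au` is `Aψ(u)ψ(f)`; with `u = φ(e)` this is the range of `ψ ∘ φ`.
-/

section

variable {A B F : Type*} [CommRing A] [CommRing B] [FunLike F A B] [MulHomClass F A B]

theorem idealOf_subset_of_mem {e g : A} (hg : g ∈ idealOf e) : idealOf g ⊆ idealOf e := by
  rintro _ ⟨a, rfl⟩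
  obtain ⟨c, rfl⟩ := hg
  exact ⟨a * c, mul_assoc a c e⟩

theorem mapsTo_idealOf (φ : F) (g : A) : Set.MapsTo φ (idealOf g) (idealOf (φ g)) := by
  rintro _ ⟨a, rfl⟩
  exact ⟨φ a, (map_mul φ a g).symm⟩

theorem image_idealOf {ψ : F} {f : A} (hψ : Set.range ψ = idealOf (ψ f)) (u : A) :
    ψ '' idealOf u = idealOf (ψ u * ψ f) := by
  ext x
  constructor
  · rintro ⟨_, ⟨a, rfl⟩, rfl⟩
    obtain ⟨b, hb⟩ : ψ a ∈ idealOf (ψ f) := hψ ▸ Set.mem_range_self a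
    exact ⟨b, by rw [map_mul, ← hb]; ring⟩
  · rintro ⟨c, rfl⟩
    obtain ⟨b, hb⟩ : c * ψ f ∈ Set.range ψ := hψ ▸ ⟨c, rfl⟩
    exact ⟨b * u, ⟨b, rfl⟩, by rw [map_mul, hb]; ring⟩

theorem IsIdempotentElem.of_injOn_idealOf {φ : F} {e g : A} (hφ : Set.InjOn φ (idealOf e))
    (hg : g ∈ idealOf e) (hφg : IsIdempotentElem (φ g)) : IsIdempotentElem g := by
  have hgg : g * g ∈ idealOf e := idealOf_subset_of_mem hg ⟨g, rfl⟩
  exact hφ hgg hg (by rw [map_mul, hφg.eq])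

theorem Set.BijOn.idealOf_of_mem {φ : F} {e g : A}
    (hφ : Set.BijOn φ (idealOf e) (idealOf (φ e))) (hg : g ∈ idealOf e)
    (hg_idem : IsIdempotentElem g) : Set.BijOn φ (idealOf g) (idealOf (φ g)) := by
  have hsub := idealOf_subset_of_mem hg
  refine ⟨mapsTo_idealOf φ g, hφ.injOn.mono hsub, ?_⟩
  rintro _ ⟨b, rfl⟩
  obtain ⟨x, hx, hφx⟩ :=
    hφ.surjOn (idealOf_subset_of_mem (mapsTo_idealOf φ e hg) ⟨b, rfl⟩)
  -- `x` and `x * g` have the same image, since `φ g` is idempotent.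
  have hxg : x * g = x :=
    hφ.injOn (hsub ⟨x, rfl⟩) hx (by rw [map_mul, hφx, mul_assoc, ← map_mul, hg_idem.eq])
  exact ⟨x, ⟨x, hxg⟩, hφx⟩

end

/-- **`J(A)` is closed under composition.**  Let `φ, ψ` be multiplicative `k`-linear
endomorphisms of a commutative algebra `A` with idempotents `e, f` such that
`φ(A) = A·φ(e)`, `ψ(A) = A·ψ(f)` and `φ|_{Ae} : Ae → Aφ(e)`,
`ψ|_{Af} : Af → Aψ(f)` are bijections.  If `g = (φ|_{Ae})⁻¹(φ(e)·f)` (i.e. `g ∈ Ae`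
and `φ(g) = φ(e)·f`), then `g` is idempotent, `(ψ∘φ)(g) = ψ(φ(e))·ψ(f)`,
`(ψ∘φ)(A) = A·ψ(φ(e))·ψ(f)` and `ψ∘φ` restricts to a bijection
`Ag → A·ψ(φ(e))·ψ(f)`; hence `ψ∘φ ∈ J(A)` with associated idempotent `g`. -/
theorem JA_closed_under_composition {k A : Type*} [CommRing k] [CommRing A] [Algebra k A]
    (φ ψ : A →ₗ[k] A)
    (hφmul : ∀ x y : A, φ (x * y) = φ x * φ y)
    (hψmul : ∀ x y : A, ψ (x * y) = ψ x * ψ y)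
    (e f : A) (he : e * e = e) (hf : f * f = f)
    (hφrange : Set.range φ = idealOf (φ e))
    (hφbij : Set.BijOn φ (idealOf e) (idealOf (φ e)))
    (hψrange : Set.range ψ = idealOf (ψ f))
    (hψbij : Set.BijOn ψ (idealOf f) (idealOf (ψ f)))
    (g : A) (hg : g ∈ idealOf e) (hgval : φ g = φ e * f) :
    g * g = g ∧
    ψ (φ g) = ψ (φ e) * ψ f ∧
    Set.range (fun a => ψ (φ a)) = idealOf (ψ (φ e) * ψ f) ∧
    Set.BijOn (fun a => ψ (φ a)) (idealOf g) (idealOf (ψ (φ e) * ψ f)) := by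
  let Φ : A →ₙ* A := ⟨φ, hφmul⟩
  let Ψ : A →ₙ* A := ⟨ψ, hψmul⟩
  have hφg : IsIdempotentElem (φ g) := hgval ▸ (IsIdempotentElem.map (f := Φ) he).mul hf
  have hg_idem : IsIdempotentElem g :=
    IsIdempotentElem.of_injOn_idealOf (φ := Φ) hφbij.injOn hg hφg
  have hψφg : ψ (φ g) = ψ (φ e) * ψ f := by rw [hgval, hψmul]
  have hφg_mem : φ g ∈ idealOf f := ⟨φ e, hgval.symm⟩
  refine ⟨hg_idem, hψφg, ?_, ?_⟩
  · change Set.range (Ψ ∘ Φ) = _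
    rw [Set.range_comp]
    exact hφrange ▸ image_idealOf (ψ := Ψ) hψrange (φ e)
  · rw [← hψφg]
    exact (Set.BijOn.idealOf_of_mem (φ := Ψ) hψbij hφg_mem hφg).comp
      (Set.BijOn.idealOf_of_mem (φ := Φ) hφbij hg hg_idem)
end

section
/- Let A be a commutative algebra. The map F : J(A) → I(A) sending φ (with idempotent e) to the isomorphism of ideals φ|_{Ae} : Ae → Aφ(e) is an isomorphism of semigroups, with inverse sending an isomorphism of unital ideals θ : Ae → Aθ(e) to the endomorphism φ_θ(a) = θ(ae). -/
/-- `φ : A → A` is multiplicative. -/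
def Mult {A : Type*} [CommRing A] (φ : A → A) : Prop := ∀ x y : A, φ (x * y) = φ x * φ y

/-- `e` is an associated idempotent of `φ ∈ J(A)`: `e` is idempotent,
`φ(A) = A·φ(e)`, and `φ` restricts to a bijection `Ae → Aφ(e)`. -/
def JData {A : Type*} [CommRing A] (φ : A → A) (e : A) : Prop :=
  e * e = e ∧ Set.range φ = idealOf (φ e) ∧ Set.BijOn φ (idealOf e) (idealOf (φ e))


/-!
A multiplicative `φ ∈ J(A)` with idempotent `e` satisfies `φ(x) = φ(xe)`, so it is determined by
its restriction to `Ae`, and `θ ↦ θ(· e)` inverts restriction; `e` is unique because `ef` lies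
in `Ae ∩ Af` and `φ(ef) = φ(e) = φ(f)`. Compatibility with composition rests on one
observation: a multiplicative map whose range is a unital ideal `Au` maps every principal ideal
`Ah` onto `Aφ(h)`. Applied twice, it shows that `ψ ∘ φ` maps `Ag = Ae ∩ φ⁻¹(Af)` onto
`Aψ(φ(g))`, where `φ(g) = φ(e) f`.
-/

section

variable {A : Type*} [CommRing A]

lemma mul_mem_idealOf (x e : A) : x * e ∈ idealOf e := ⟨x, rfl⟩

lemma mul_mem_idealOf_of_mem (c : A) {e x : A} (hx : x ∈ idealOf e) : c * x ∈ idealOf e := by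
  obtain ⟨a, rfl⟩ := hx
  exact ⟨c * a, mul_assoc c a e⟩

lemma mul_eq_of_mem_idealOf {e x : A} (he : IsIdempotentElem e) (hx : x ∈ idealOf e) :
    x * e = x := by
  obtain ⟨a, rfl⟩ := hx
  rw [mul_assoc, he.eq]

lemma Mult.comp {φ ψ : A → A} (hψ : Mult ψ) (hφ : Mult φ) : Mult (ψ ∘ φ) := fun x y => by
  simp only [Function.comp_apply, hφ x y, hψ (φ x) (φ y)]

lemma Mult.isIdempotentElem_apply {φ : A → A} (hm : Mult φ) {e : A} (he : IsIdempotentElem e) :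
    IsIdempotentElem (φ e) := by
  rw [IsIdempotentElem, ← hm, he.eq]

lemma Mult.image_idealOf {φ : A → A} (hm : Mult φ) {u : A} (hu : IsIdempotentElem u)
    (hr : Set.range φ = idealOf u) (h : A) : φ '' idealOf h = idealOf (φ h) := by
  ext y
  constructor
  · rintro ⟨_, ⟨a, rfl⟩, rfl⟩
    exact ⟨φ a, (hm a h).symm⟩
  · rintro ⟨b, rfl⟩
    obtain ⟨c, hc⟩ : b * u ∈ Set.range φ := hr ▸ mul_mem_idealOf b u
    have hφh : φ h * u = φ h := mul_eq_of_mem_idealOf hu (hr ▸ Set.mem_range_self h)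
    refine ⟨c * h, mul_mem_idealOf c h, ?_⟩
    rw [hm, hc, mul_assoc, mul_comm u, hφh]

namespace JData

variable {φ ψ : A → A} {e f : A}

lemma apply_mul_apply_self (hm : Mult φ) (hφ : JData φ e) (x : A) : φ x * φ e = φ x :=
  mul_eq_of_mem_idealOf (hm.isIdempotentElem_apply hφ.1) (hφ.2.1 ▸ Set.mem_range_self x)

lemma apply_mul (hm : Mult φ) (hφ : JData φ e) (x : A) : φ (x * e) = φ x := by
  rw [hm, hφ.apply_mul_apply_self hm]

lemma image_idealOf (hm : Mult φ) (hφ : JData φ e) (h : A) : φ '' idealOf h = idealOf (φ h) :=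
  hm.image_idealOf (hm.isIdempotentElem_apply hφ.1) hφ.2.1 h

lemma unique (hm : Mult φ) (he : JData φ e) (hf : JData φ f) : e = f := by
  have hφe : φ (e * f) = φ e := hf.apply_mul hm e
  have hφf : φ (e * f) = φ f := by rw [mul_comm, he.apply_mul hm]
  have hef_e : e * f = e := he.2.2.injOn ⟨f, mul_comm f e⟩ ⟨e, he.1⟩ hφe
  have hef_f : e * f = f := hf.2.2.injOn (mul_mem_idealOf e f) ⟨f, hf.1⟩ hφf
  rw [← hef_e, hef_f]

lemma eq_of_eqOn (hmφ : Mult φ) (hmψ : Mult ψ) (hφ : JData φ e) (hψ : JData ψ e)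
    (heq : Set.EqOn φ ψ (idealOf e)) : φ = ψ := funext fun a =>
  calc φ a = φ (a * e) := (hφ.apply_mul hmφ a).symm
    _ = ψ (a * e) := heq (mul_mem_idealOf a e)
    _ = ψ a := hψ.apply_mul hmψ a

lemma isIdempotentElem_of_apply_eq (hmφ : Mult φ) (hφ : JData φ e) (hf : IsIdempotentElem f)
    {g : A} (hg : g ∈ idealOf e) (hφg : φ g = φ e * f) : IsIdempotentElem g := by
  refine hφ.2.2.injOn (mul_mem_idealOf_of_mem g hg) hg ?_
  rw [hmφ, hφg, ((hmφ.isIdempotentElem_apply hφ.1).mul hf).eq]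

lemma idealOf_eq_of_apply_eq (hmφ : Mult φ) (hφ : JData φ e) (hf : IsIdempotentElem f)
    {g : A} (hg : g ∈ idealOf e) (hφg : φ g = φ e * f) :
    idealOf g = {x ∈ idealOf e | φ x ∈ idealOf f} := by
  ext x
  constructor
  · rintro ⟨a, rfl⟩
    refine ⟨mul_mem_idealOf_of_mem a hg, ?_⟩
    rw [hmφ, hφg, ← mul_assoc]
    exact mul_mem_idealOf _ f
  · rintro ⟨hxe, hxf⟩
    refine ⟨x, hφ.2.2.injOn (mul_mem_idealOf_of_mem x hg) hxe ?_⟩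
    rw [hmφ, hφg, ← mul_assoc, hφ.apply_mul_apply_self hmφ, mul_eq_of_mem_idealOf hf hxf]

lemma comp (hmφ : Mult φ) (hmψ : Mult ψ) (hφ : JData φ e) (hψ : JData ψ f) {g : A}
    (hg : g ∈ idealOf e) (hφg : φ g = φ e * f) : JData (ψ ∘ φ) g := by
  have hideal := idealOf_eq_of_apply_eq hmφ hφ hψ.1 hg hφg
  have hψφg : ψ (φ g) = ψ (φ e) := by rw [hφg, hψ.apply_mul hmψ]
  have hinj : Set.InjOn (ψ ∘ φ) (idealOf g) := by
    rw [hideal]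
    exact hψ.2.2.injOn.comp (hφ.2.2.injOn.mono (Set.sep_subset _ _)) fun x hx => hx.2
  have himage : (ψ ∘ φ) '' idealOf g = idealOf ((ψ ∘ φ) g) := by
    rw [Set.image_comp, hφ.image_idealOf hmφ, hψ.image_idealOf hmψ, Function.comp_apply]
  refine ⟨isIdempotentElem_of_apply_eq hmφ hφ hψ.1 hg hφg, ?_, himage ▸ hinj.bijOn_image⟩
  rw [Set.range_comp, hφ.2.1, hψ.image_idealOf hmψ, Function.comp_apply, hψφg]

end JData

section restriction

variable {θ : A → A} {e : A}

lemma mult_comp_mul_right (he : IsIdempotentElem e)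
    (hθ : ∀ x ∈ idealOf e, ∀ y ∈ idealOf e, θ (x * y) = θ x * θ y) :
    Mult fun a => θ (a * e) := fun x y => by
  show θ (x * y * e) = θ (x * e) * θ (y * e)
  have hxy : x * y * e = x * e * (y * e) := by
    rw [mul_mul_mul_comm, he.eq]
  rw [hxy, hθ _ (mul_mem_idealOf x e) _ (mul_mem_idealOf y e)]

lemma eqOn_comp_mul_right (he : IsIdempotentElem e) :
    Set.EqOn (fun a => θ (a * e)) θ (idealOf e) := fun x hx => by
  simp only [mul_eq_of_mem_idealOf he hx]

lemma jData_comp_mul_right (he : IsIdempotentElem e)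
    (hθ : Set.BijOn θ (idealOf e) (idealOf (θ e))) : JData (fun a => θ (a * e)) e := by
  have hθe : (fun a => θ (a * e)) e = θ e := congrArg θ he.eq
  refine ⟨he, ?_, ?_⟩
  · rw [hθe, ← hθ.image_eq, idealOf, ← Set.range_comp]
    rfl
  · rw [hθe]
    exact hθ.congr fun x hx => (eqOn_comp_mul_right he hx).symm

end restriction

end

/-- **`F : J(A) → I(A)`, `φ ↦ φ|_{Ae}`, is an isomorphism of semigroups.**
Concretely: (1) the idempotent `e` associated to `φ ∈ J(A)` is unique, so `F` is
well defined; (2) `F` is injective: elements of `J(A)` with the same associated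
idempotent and the same restriction to `Ae` coincide; (3) `F` is surjective, with
inverse sending an isomorphism of unital ideals `θ : Ae → Aθ(e)` to
`φ_θ(a) = θ(a·e)`, which lies in `J(A)` with idempotent `e` and restriction `θ`;
(4) `F` turns composition in `J(A)` into the composition of partial isomorphisms:
for `φ, ψ ∈ J(A)` with idempotents `e, f`, the composite `ψ∘φ` lies in `J(A)` with
idempotent `g = (φ|_{Ae})⁻¹(φ(e)·f)`, whose ideal `Ag` is exactly the domain
`{x ∈ Ae | φ(x) ∈ Af}` of the composite partial bijection. -/
theorem JA_iso_IA {k A : Type*} [CommRing k] [CommRing A] [Algebra k A] :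
    -- (1) uniqueness of the associated idempotent
    (∀ φ : A →ₗ[k] A, Mult ⇑φ → ∀ e f : A, JData ⇑φ e → JData ⇑φ f → e = f) ∧
    -- (2) injectivity of F
    (∀ φ ψ : A →ₗ[k] A, Mult ⇑φ → Mult ⇑ψ → ∀ e : A, JData ⇑φ e → JData ⇑ψ e →
      Set.EqOn ⇑φ ⇑ψ (idealOf e) → φ = ψ) ∧
    -- (3) surjectivity of F, via θ ↦ φ_θ = θ ∘ (·*e)
    (∀ (θ : A →ₗ[k] A) (e : A), e * e = e →
      (∀ x ∈ idealOf e, ∀ y ∈ idealOf e, θ (x * y) = θ x * θ y) →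
      Set.BijOn ⇑θ (idealOf e) (idealOf (θ e)) →
      Mult ⇑(θ ∘ₗ LinearMap.mulRight k e) ∧
      JData ⇑(θ ∘ₗ LinearMap.mulRight k e) e ∧
      Set.EqOn ⇑(θ ∘ₗ LinearMap.mulRight k e) ⇑θ (idealOf e)) ∧
    -- (4) compatibility with composition
    (∀ φ ψ : A →ₗ[k] A, Mult ⇑φ → Mult ⇑ψ → ∀ e f : A, JData ⇑φ e → JData ⇑ψ f →
      ∀ g : A, g ∈ idealOf e → φ g = φ e * f →
        Mult ⇑(ψ ∘ₗ φ) ∧ JData ⇑(ψ ∘ₗ φ) g ∧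
        idealOf g = {x ∈ idealOf e | φ x ∈ idealOf f}) := by
  refine ⟨fun φ hm e f he hf => he.unique hm hf,
    fun φ ψ hmφ hmψ e hφ hψ heq => LinearMap.coe_injective (hφ.eq_of_eqOn hmφ hmψ hψ heq),
    fun θ e he hθ hbij => ⟨mult_comp_mul_right he hθ, jData_comp_mul_right he hbij,
      eqOn_comp_mul_right he⟩, ?_⟩
  intro φ ψ hmφ hmψ e f hφ hψ g hg hφg
  exact ⟨hmψ.comp hmφ, JData.comp hmφ hmψ hφ hψ hg hφg,
    JData.idealOf_eq_of_apply_eq hmφ hφ hψ.1 hg hφg⟩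
end
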